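/- arXiv:2206.08364 — 6 statements merged into one kernel-verified Lean document; each statement's English description precedes it below -/
import Mathlib

section
/- Fix an action a ∈ A with d^μ_a > 0 and 0 < ρ^μ_a < 1, and assume feedback satisfies context conditional independence. Then for every f : X × A → [0,1] and every ψ : Y × A → [0,1], E_{μ_a}[f(x,a)·ψ(y,a)] = (1 − ρ^μ_a)·f_{a,0}·ψ_{a,0} + ρ^μ_a·f_{a,1}·ψ_{a,1}. -/
open Finset

variable {X A Y : Type*} [Fintype X] [Fintype A] [Fintype Y]

/-- `d^μ_a = Σ_x d0(x) μ(a|x)` -/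
noncomputable def dmu (d0 : X → ℝ) (μ : X → A → ℝ) (a : A) : ℝ :=
  ∑ x, d0 x * μ x a

/-- `ρ^μ_a = (1/d^μ_a) Σ_x d0(x) μ(a|x) R(x,a)` -/
noncomputable def rho (d0 : X → ℝ) (μ : X → A → ℝ) (R : X → A → ℝ) (a : A) : ℝ :=
  (∑ x, d0 x * μ x a * R x a) / dmu d0 μ a

/-- `f_{a,1}` -/
noncomputable def fa1 (d0 : X → ℝ) (μ : X → A → ℝ) (R : X → A → ℝ) (a : A)
    (f : X → A → ℝ) : ℝ :=
  (∑ x, d0 x * μ x a * R x a * f x a) / (dmu d0 μ a * rho d0 μ R a)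

/-- `f_{a,0}` -/
noncomputable def fa0 (d0 : X → ℝ) (μ : X → A → ℝ) (R : X → A → ℝ) (a : A)
    (f : X → A → ℝ) : ℝ :=
  (∑ x, d0 x * μ x a * (1 - R x a) * f x a) / (dmu d0 μ a * (1 - rho d0 μ R a))

/-- `ψ_{a,r} = Σ_y P(y|a,r) ψ(y,a)` (`r : Bool`) -/
noncomputable def psir (P : A → Bool → Y → ℝ) (a : A) (r : Bool) (ψ : Y → A → ℝ) : ℝ :=
  ∑ y, P a r y * ψ y a

/-- `E_{μ_a}[g(x,y)]` under context conditional independence: conditioned on `(x,a)`,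
`y` is drawn from the mixture `(1 - R(x,a))·P(·|a,0) + R(x,a)·P(·|a,1)`. -/
noncomputable def Emu (d0 : X → ℝ) (μ : X → A → ℝ) (R : X → A → ℝ)
    (P : A → Bool → Y → ℝ) (a : A) (g : X → Y → ℝ) : ℝ :=
  (1 / dmu d0 μ a) * ∑ x, ∑ y,
    d0 x * μ x a * ((1 - R x a) * P a false y + R x a * P a true y) * g x y

/-- `E_{μ̃_a}[g(x̃,ỹ)]`, where `μ̃_a` is the product of the x-marginal and the y-marginal
of `μ_a`. -/
noncomputable def Etilde (d0 : X → ℝ) (μ : X → A → ℝ) (R : X → A → ℝ)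
    (P : A → Bool → Y → ℝ) (a : A) (g : X → Y → ℝ) : ℝ :=
  ∑ x, ∑ y, (d0 x * μ x a / dmu d0 μ a) *
    (∑ x', (d0 x' * μ x' a / dmu d0 μ a) *
      ((1 - R x' a) * P a false y + R x' a * P a true y)) * g x y

/-- The contrastive objective `L_a(f,ψ)`. -/
noncomputable def La (d0 : X → ℝ) (μ : X → A → ℝ) (R : X → A → ℝ)
    (P : A → Bool → Y → ℝ) (a : A) (f : X → A → ℝ) (ψ : Y → A → ℝ) : ℝ :=
  Emu d0 μ R P a (fun x y => (f x a - ψ y a) ^ 2)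
    - Etilde d0 μ R P a (fun x y => (f x a - ψ y a) ^ 2)

/-- under context conditional independence,
`E_{μ_a}[f(x,a)·ψ(y,a)] = (1 − ρ^μ_a)·f_{a,0}·ψ_{a,0} + ρ^μ_a·f_{a,1}·ψ_{a,1}`. -/
theorem statement0
    (d0 : X → ℝ) (μ : X → A → ℝ) (R : X → A → ℝ) (P : A → Bool → Y → ℝ) (a : A)
    (hd0 : ∀ x, 0 ≤ d0 x) (hd0sum : ∑ x, d0 x = 1)
    (hμ : ∀ x a', 0 ≤ μ x a') (hμsum : ∀ x, ∑ a', μ x a' = 1)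
    (hR : ∀ x a', R x a' ∈ Set.Icc (0:ℝ) 1)
    (hP : ∀ a' r y, 0 ≤ P a' r y) (hPsum : ∀ a' r, ∑ y, P a' r y = 1)
    (hda : 0 < dmu d0 μ a) (hρ0 : 0 < rho d0 μ R a) (hρ1 : rho d0 μ R a < 1)
    (f : X → A → ℝ) (hf : ∀ x a', f x a' ∈ Set.Icc (0:ℝ) 1)
    (ψ : Y → A → ℝ) (hψ : ∀ y a', ψ y a' ∈ Set.Icc (0:ℝ) 1) :
    Emu d0 μ R P a (fun x y => f x a * ψ y a) =
      (1 - rho d0 μ R a) * fa0 d0 μ R a f * psir P a false ψ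
        + rho d0 μ R a * fa1 d0 μ R a f * psir P a true ψ := by
  have hρ0' : rho d0 μ R a ≠ 0 := ne_of_gt hρ0
  have hρ1' : 1 - rho d0 μ R a ≠ 0 := by linarith
  have hda' : dmu d0 μ a ≠ 0 := ne_of_gt hda
  have key : ∀ x, ∑ y, d0 x * μ x a * ((1 - R x a) * P a false y + R x a * P a true y)
      * (f x a * ψ y a)
      = d0 x * μ x a * (1 - R x a) * f x a * psir P a false ψ
        + d0 x * μ x a * R x a * f x a * psir P a true ψ := by
    intro x
    simp only [psir, Finset.mul_sum, ← Finset.sum_add_distrib]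
    exact Finset.sum_congr rfl fun y _ => by ring
  simp only [Emu, key, Finset.sum_add_distrib, ← Finset.sum_mul, fa0, fa1]
  field_simp
end

section
/- Fix an action a ∈ A with d^μ_a > 0 and 0 < ρ^μ_a < 1, and assume feedback satisfies context conditional independence. Then for every f : X × A → [0,1] and every ψ : Y × A → [0,1], E_{μ_a}[f(x,a)·ψ(y,a)] − E_{μ_a}[f(x,a)]·E_{μ_a}[ψ(y,a)] = (1 − ρ^μ_a)·ρ^μ_a·(f_{a,1} − f_{a,0})·(ψ_{a,1} − ψ_{a,0}). -/
open Finset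

variable {X A Y : Type*} [Fintype X] [Fintype A] [Fintype Y]

/-- under context conditional independence,
`E_{μ_a}[fψ] − E_{μ_a}[f]·E_{μ_a}[ψ] = (1 − ρ)·ρ·(f_{a,1} − f_{a,0})·(ψ_{a,1} − ψ_{a,0})`. -/
theorem statement2
    (d0 : X → ℝ) (μ : X → A → ℝ) (R : X → A → ℝ) (P : A → Bool → Y → ℝ) (a : A)
    (hd0 : ∀ x, 0 ≤ d0 x) (hd0sum : ∑ x, d0 x = 1)
    (hμ : ∀ x a', 0 ≤ μ x a') (hμsum : ∀ x, ∑ a', μ x a' = 1)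
    (hR : ∀ x a', R x a' ∈ Set.Icc (0:ℝ) 1)
    (hP : ∀ a' r y, 0 ≤ P a' r y) (hPsum : ∀ a' r, ∑ y, P a' r y = 1)
    (hda : 0 < dmu d0 μ a) (hρ0 : 0 < rho d0 μ R a) (hρ1 : rho d0 μ R a < 1)
    (f : X → A → ℝ) (hf : ∀ x a', f x a' ∈ Set.Icc (0:ℝ) 1)
    (ψ : Y → A → ℝ) (hψ : ∀ y a', ψ y a' ∈ Set.Icc (0:ℝ) 1) :
    Emu d0 μ R P a (fun x y => f x a * ψ y a)
        - Emu d0 μ R P a (fun x _ => f x a) * Emu d0 μ R P a (fun _ y => ψ y a) =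
      (1 - rho d0 μ R a) * rho d0 μ R a * (fa1 d0 μ R a f - fa0 d0 μ R a f) *
        (psir P a true ψ - psir P a false ψ) := by
  have hD : dmu d0 μ a ≠ 0 := ne_of_gt hda
  have hrho : rho d0 μ R a = (∑ x, d0 x * μ x a * R x a) / dmu d0 μ a := rfl
  have hSpos : 0 < ∑ x, d0 x * μ x a * R x a := by
    have := mul_pos hρ0 hda
    rwa [hrho, div_mul_cancel₀ _ hD] at this
  have hSD : (∑ x, d0 x * μ x a * R x a) < dmu d0 μ a := by
    have := hρ1; rw [hrho, div_lt_one hda] at this; exact this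
  have E1 : Emu d0 μ R P a (fun x y => f x a * ψ y a) =
      (1 / dmu d0 μ a) * (((∑ x, d0 x * μ x a * f x a) - ∑ x, d0 x * μ x a * R x a * f x a) *
        psir P a false ψ + (∑ x, d0 x * μ x a * R x a * f x a) * psir P a true ψ) := by
    unfold Emu
    congr 1
    have inner : ∀ x, ∑ y, d0 x * μ x a * ((1 - R x a) * P a false y + R x a * P a true y) *
        (f x a * ψ y a) = (d0 x * μ x a * f x a - d0 x * μ x a * R x a * f x a) * psir P a false ψ
          + (d0 x * μ x a * R x a * f x a) * psir P a true ψ := by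
      intro x
      simp only [psir, Finset.mul_sum, ← Finset.sum_add_distrib]
      exact Finset.sum_congr rfl fun y _ => by ring
    simp only [inner]
    rw [Finset.sum_add_distrib, ← Finset.sum_mul, ← Finset.sum_mul, Finset.sum_sub_distrib]
  have E2 : Emu d0 μ R P a (fun x _ => f x a) = (1 / dmu d0 μ a) * ∑ x, d0 x * μ x a * f x a := by
    unfold Emu
    congr 1
    refine Finset.sum_congr rfl fun x _ => ?_
    have : ∑ y, d0 x * μ x a * ((1 - R x a) * P a false y + R x a * P a true y) * f x a
        = (d0 x * μ x a * (1 - R x a) * f x a) * (∑ y, P a false y)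
          + (d0 x * μ x a * R x a * f x a) * ∑ y, P a true y := by
      rw [Finset.mul_sum, Finset.mul_sum, ← Finset.sum_add_distrib]
      exact Finset.sum_congr rfl fun y _ => by ring
    rw [this, hPsum, hPsum]; ring
  have E3 : Emu d0 μ R P a (fun _ y => ψ y a) = (1 / dmu d0 μ a) *
      ((dmu d0 μ a - ∑ x, d0 x * μ x a * R x a) * psir P a false ψ +
        (∑ x, d0 x * μ x a * R x a) * psir P a true ψ) := by
    unfold Emu
    congr 1
    have inner : ∀ x, ∑ y, d0 x * μ x a * ((1 - R x a) * P a false y + R x a * P a true y) *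
        ψ y a = (d0 x * μ x a - d0 x * μ x a * R x a) * psir P a false ψ
          + (d0 x * μ x a * R x a) * psir P a true ψ := by
      intro x
      simp only [psir, Finset.mul_sum, ← Finset.sum_add_distrib]
      exact Finset.sum_congr rfl fun y _ => by ring
    simp only [inner]
    rw [Finset.sum_add_distrib, ← Finset.sum_mul, ← Finset.sum_mul, Finset.sum_sub_distrib]
    rfl
  rw [E1, E2, E3]
  unfold fa1 fa0
  rw [hrho]
  have hDS : dmu d0 μ a - (∑ x, d0 x * μ x a * R x a) ≠ 0 := by linarith
  have hsub : ∑ x, d0 x * μ x a * (1 - R x a) * f x a =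
      (∑ x, d0 x * μ x a * f x a) - ∑ x, d0 x * μ x a * R x a * f x a := by
    rw [← Finset.sum_sub_distrib]
    exact Finset.sum_congr rfl fun x _ => by ring
  rw [hsub]
  field_simp
  ring
end

section
/- (Proposition 1.) Fix an action a ∈ A, assume μ(a|x) > 0 for all x ∈ X, 0 < ρ^μ_a < 1, and context conditional independence. Let F be a nonempty finite set of functions f : X × A → [0,1] and Ψ a nonempty finite set of functions ψ : Y × A → [0,1] closed under complementation (ψ ∈ Ψ implies 1 − ψ ∈ Ψ). Assume there exists ψ* ∈ Ψ with ψ*_{a,1} − ψ*_{a,0} = 1 and there exists f* ∈ F with |f*_{a,1} − f*_{a,0}| ≥ Δ_F for some Δ_F > 0. If (f̂, ψ̂) minimizes the contrastive objective L_a(f,ψ) := E_{μ_a}[(f(x,a) − ψ(y,a))²] − E_{μ̃_a}[(f(x̃,a) − ψ(ỹ,a))²] over F × Ψ, then |f̂_{a,1} − f̂_{a,0}| = max over f ∈ F of |f_{a,1} − f_{a,0}|, and |ψ̂_{a,1} − ψ̂_{a,0}| = max over ψ ∈ Ψ of |ψ_{a,1} − ψ_{a,0}|. -/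
open Finset

variable {X A Y : Type*} [Fintype X] [Fintype A] [Fintype Y]

private lemma sum_sq_expand (w g : Y → ℝ) (hw : ∑ y, w y = 1) (c : ℝ) :
    ∑ y, w y * (c - g y) ^ 2
      = c ^ 2 - 2 * c * (∑ y, w y * g y) + ∑ y, w y * g y ^ 2 := by
  have h : ∀ y, w y * (c - g y) ^ 2
      = c ^ 2 * w y - (2 * c) * (w y * g y) + w y * g y ^ 2 := fun y => by ring
  rw [Finset.sum_congr rfl fun y _ => h y]
  rw [Finset.sum_add_distrib, Finset.sum_sub_distrib, ← Finset.mul_sum, ← Finset.mul_sum, hw]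
  ring
private lemma La_eq (d0 : X → ℝ) (μ : X → A → ℝ) (R : X → A → ℝ) (P : A → Bool → Y → ℝ)
    (a : A) (hd : dmu d0 μ a ≠ 0)
    (hS : (∑ x, d0 x * μ x a * R x a) ≠ 0)
    (hS' : dmu d0 μ a - (∑ x, d0 x * μ x a * R x a) ≠ 0)
    (hP0 : ∑ y, P a false y = 1) (hP1 : ∑ y, P a true y = 1)
    (f : X → A → ℝ) (ψ : Y → A → ℝ) :
    La d0 μ R P a f ψ =
      -(2 * rho d0 μ R a * (1 - rho d0 μ R a) *
        ((fa1 d0 μ R a f - fa0 d0 μ R a f) *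
          (psir P a true ψ - psir P a false ψ))) := by
  set d := dmu d0 μ a with hd_def
  set S := ∑ x, d0 x * μ x a * R x a with hS_def
  set ψ0 := ∑ y, P a false y * ψ y a with hψ0_def
  set ψ1 := ∑ y, P a true y * ψ y a with hψ1_def
  set q0 := ∑ y, P a false y * ψ y a ^ 2 with hq0_def
  set q1 := ∑ y, P a true y * ψ y a ^ 2 with hq1_def
  set T0 := ∑ x, d0 x * μ x a * (1 - R x a) * f x a with hT0_def
  set T1 := ∑ x, d0 x * μ x a * R x a * f x a with hT1_def
  set U := ∑ x, d0 x * μ x a * f x a ^ 2 with hU_def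
  set W := ∑ x, d0 x * μ x a * f x a with hW_def
  have hdsum : (∑ x, d0 x * μ x a) = d := rfl
  have hWT : W = T0 + T1 := by
    rw [hT0_def, hT1_def, hW_def, ← Finset.sum_add_distrib]
    exact Finset.sum_congr rfl fun x _ => by ring
  have hEmu : Emu d0 μ R P a (fun x y => (f x a - ψ y a) ^ 2)
      = (1 / d) * (U - T0 * (2 * ψ0) - T1 * (2 * ψ1)
          + ((d : ℝ) * q0 - S * q0 + S * q1)) := by
    have hx : ∀ x ∈ (Finset.univ : Finset X),
        (∑ y, d0 x * μ x a * ((1 - R x a) * P a false y + R x a * P a true y)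
            * (f x a - ψ y a) ^ 2)
        = d0 x * μ x a * f x a ^ 2
          - (d0 x * μ x a * (1 - R x a) * f x a) * (2 * ψ0)
          - (d0 x * μ x a * R x a * f x a) * (2 * ψ1)
          + ((d0 x * μ x a) * q0 - (d0 x * μ x a * R x a) * q0
              + (d0 x * μ x a * R x a) * q1) := by
      intro x _
      have h : ∀ y, d0 x * μ x a * ((1 - R x a) * P a false y + R x a * P a true y)
            * (f x a - ψ y a) ^ 2
          = (d0 x * μ x a * (1 - R x a) * f x a ^ 2) * P a false y
            + (d0 x * μ x a * R x a * f x a ^ 2) * P a true y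
            - (d0 x * μ x a * (1 - R x a) * f x a * 2) * (P a false y * ψ y a)
            - (d0 x * μ x a * R x a * f x a * 2) * (P a true y * ψ y a)
            + (d0 x * μ x a * (1 - R x a)) * (P a false y * ψ y a ^ 2)
            + (d0 x * μ x a * R x a) * (P a true y * ψ y a ^ 2) := fun y => by ring
      rw [Finset.sum_congr rfl fun y _ => h y]
      simp only [Finset.sum_add_distrib, Finset.sum_sub_distrib, ← Finset.mul_sum]
      rw [hP0, hP1, ← hψ0_def, ← hψ1_def, ← hq0_def, ← hq1_def]
      ring
    show (1 / d) * _ = _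
    rw [Finset.sum_congr rfl hx]
    simp only [Finset.sum_add_distrib, Finset.sum_sub_distrib, ← Finset.sum_mul]
    rw [← hU_def, ← hT0_def, ← hT1_def, hdsum, ← hS_def]
  have hin : ∀ y, (∑ x', d0 x' * μ x' a / d
        * ((1 - R x' a) * P a false y + R x' a * P a true y))
      = ((d - S) * P a false y + S * P a true y) / d := by
    intro y
    have h : ∀ x', d0 x' * μ x' a / d * ((1 - R x' a) * P a false y + R x' a * P a true y)
        = (d0 x' * μ x' a * P a false y - (d0 x' * μ x' a * R x' a) * P a false y
            + (d0 x' * μ x' a * R x' a) * P a true y) * (1 / d) := fun x' => by ring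
    rw [Finset.sum_congr rfl fun x' _ => h x', ← Finset.sum_mul]
    simp only [Finset.sum_add_distrib, Finset.sum_sub_distrib, ← Finset.sum_mul]
    rw [hdsum, ← hS_def]
    ring
  have hEtilde : Etilde d0 μ R P a (fun x y => (f x a - ψ y a) ^ 2)
      = U * ((d - S) / (d * d) + S / (d * d))
        - W * (2 * ψ0 * (d - S) / (d * d) + 2 * ψ1 * S / (d * d))
        + d * (q0 * (d - S) / (d * d) + q1 * S / (d * d)) := by
    show (∑ x, ∑ y, (d0 x * μ x a / d) * _ * _) = _
    have hx2 : ∀ x ∈ (Finset.univ : Finset X),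
        (∑ y, d0 x * μ x a / d *
            (∑ x', d0 x' * μ x' a / d
              * ((1 - R x' a) * P a false y + R x' a * P a true y))
            * (f x a - ψ y a) ^ 2)
        = (d0 x * μ x a * f x a ^ 2) * ((d - S) / (d * d) + S / (d * d))
          - (d0 x * μ x a * f x a) * (2 * ψ0 * (d - S) / (d * d) + 2 * ψ1 * S / (d * d))
          + (d0 x * μ x a) * (q0 * (d - S) / (d * d) + q1 * S / (d * d)) := by
      intro x _
      simp only [hin]
      have h : ∀ y, d0 x * μ x a / d * (((d - S) * P a false y + S * P a true y) / d)
            * (f x a - ψ y a) ^ 2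
          = (d0 x * μ x a * (d - S) / (d * d)) * (P a false y * (f x a - ψ y a) ^ 2)
            + (d0 x * μ x a * S / (d * d)) * (P a true y * (f x a - ψ y a) ^ 2) :=
        fun y => by ring
      rw [Finset.sum_congr rfl fun y _ => h y, Finset.sum_add_distrib,
        ← Finset.mul_sum, ← Finset.mul_sum,
        sum_sq_expand (P a false) (fun y => ψ y a) hP0 (f x a),
        sum_sq_expand (P a true) (fun y => ψ y a) hP1 (f x a)]
      rw [← hψ0_def, ← hψ1_def, ← hq0_def, ← hq1_def]
      ring
    rw [Finset.sum_congr rfl hx2]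
    simp only [Finset.sum_add_distrib, Finset.sum_sub_distrib, ← Finset.sum_mul]
    rw [← hU_def, ← hW_def, hdsum]
  rw [La, hEmu, hEtilde, hWT]
  show _ = -(2 * (S / d) * (1 - S / d) *
      ((T1 / (d * (S / d)) - T0 / (d * (1 - S / d))) * (ψ1 - ψ0)))
  field_simp
  ring
/-- Proposition 1: any minimizer `(f̂,ψ̂)` of the contrastive objective `L_a`
over `F × Ψ` maximizes both `|f_{a,1} − f_{a,0}|` over `F` and `|ψ_{a,1} − ψ_{a,0}|` over `Ψ`. -/
theorem statement5
    (d0 : X → ℝ) (μ : X → A → ℝ) (R : X → A → ℝ) (P : A → Bool → Y → ℝ) (a : A)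
    (hd0 : ∀ x, 0 ≤ d0 x) (hd0sum : ∑ x, d0 x = 1)
    (hμ : ∀ x a', 0 ≤ μ x a') (hμsum : ∀ x, ∑ a', μ x a' = 1)
    (hμpos : ∀ x, 0 < μ x a)
    (hR : ∀ x a', R x a' ∈ Set.Icc (0:ℝ) 1)
    (hP : ∀ a' r y, 0 ≤ P a' r y) (hPsum : ∀ a' r, ∑ y, P a' r y = 1)
    (hρ0 : 0 < rho d0 μ R a) (hρ1 : rho d0 μ R a < 1)
    (F : Finset (X → A → ℝ)) (hF : F.Nonempty)
    (hFmem : ∀ f ∈ F, ∀ x a', f x a' ∈ Set.Icc (0:ℝ) 1)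
    (Ψ : Finset (Y → A → ℝ)) (hΨ : Ψ.Nonempty)
    (hΨmem : ∀ ψ ∈ Ψ, ∀ y a', ψ y a' ∈ Set.Icc (0:ℝ) 1)
    (hΨcl : ∀ ψ ∈ Ψ, (fun y a' => 1 - ψ y a') ∈ Ψ)
    (ψstar : Y → A → ℝ) (hψstarmem : ψstar ∈ Ψ)
    (hψstar : psir P a true ψstar - psir P a false ψstar = 1)
    (ΔF : ℝ) (hΔF : 0 < ΔF)
    (fstar : X → A → ℝ) (hfstarmem : fstar ∈ F)
    (hfstar : ΔF ≤ |fa1 d0 μ R a fstar - fa0 d0 μ R a fstar|)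
    (fhat : X → A → ℝ) (ψhat : Y → A → ℝ) (hfhat : fhat ∈ F) (hψhat : ψhat ∈ Ψ)
    (hmin : ∀ f ∈ F, ∀ ψ ∈ Ψ, La d0 μ R P a fhat ψhat ≤ La d0 μ R P a f ψ) :
    |fa1 d0 μ R a fhat - fa0 d0 μ R a fhat| =
        F.sup' hF (fun f => |fa1 d0 μ R a f - fa0 d0 μ R a f|) ∧
      |psir P a true ψhat - psir P a false ψhat| =
        Ψ.sup' hΨ (fun ψ => |psir P a true ψ - psir P a false ψ|) := by
  
  -- positivity facts
  obtain ⟨x₀, -, hx₀⟩ := Finset.exists_ne_zero_of_sum_ne_zero (hd0sum ▸ one_ne_zero)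
  have hdpos : 0 < dmu d0 μ a :=
    Finset.sum_pos' (fun x _ => mul_nonneg (hd0 x) (hμ x a))
      ⟨x₀, Finset.mem_univ _, mul_pos ((hd0 x₀).lt_of_ne (Ne.symm hx₀)) (hμpos x₀)⟩
  have hdne : dmu d0 μ a ≠ 0 := hdpos.ne'
  have hSd : (∑ x, d0 x * μ x a * R x a) = rho d0 μ R a * dmu d0 μ a := by
    rw [rho, div_mul_cancel₀ _ hdne]
  have hSpos : 0 < ∑ x, d0 x * μ x a * R x a := hSd ▸ mul_pos hρ0 hdpos
  have hS'pos : 0 < dmu d0 μ a - ∑ x, d0 x * μ x a * R x a := by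
    rw [hSd]; nlinarith
  have hLa : ∀ f ψ', La d0 μ R P a f ψ' =
      -(2 * rho d0 μ R a * (1 - rho d0 μ R a) *
        ((fa1 d0 μ R a f - fa0 d0 μ R a f) *
          (psir P a true ψ' - psir P a false ψ'))) :=
    fun f ψ' => La_eq d0 μ R P a hdne hSpos.ne' hS'pos.ne' (hPsum a false) (hPsum a true) f ψ'
  have hc : 0 < 2 * rho d0 μ R a * (1 - rho d0 μ R a) := by nlinarith
  -- complement flips the psir gap
  have hcomp : ∀ ψ' : Y → A → ℝ,
      psir P a true (fun y a' => 1 - ψ' y a') - psir P a false (fun y a' => 1 - ψ' y a')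
        = -(psir P a true ψ' - psir P a false ψ') := by
    intro ψ'
    simp only [psir, mul_sub, mul_one, Finset.sum_sub_distrib, hPsum]
    ring
  set Mf := F.sup' hF (fun f => |fa1 d0 μ R a f - fa0 d0 μ R a f|) with hMf_def
  set Mψ := Ψ.sup' hΨ (fun ψ' => |psir P a true ψ' - psir P a false ψ'|) with hMψ_def
  have hMf : ΔF ≤ Mf :=
    hfstar.trans (Finset.le_sup' (fun f => |fa1 d0 μ R a f - fa0 d0 μ R a f|) hfstarmem)
  have hMψ : (1:ℝ) ≤ Mψ := by
    have h := Finset.le_sup' (fun ψ' => |psir P a true ψ' - psir P a false ψ'|) hψstarmem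
    rw [hψstar, abs_one] at h
    exact h
  have hMfpos : 0 < Mf := hΔF.trans_le hMf
  have hMψpos : 0 < Mψ := lt_of_lt_of_le one_pos hMψ
  obtain ⟨f0, hf0mem, hf0eq⟩ :=
    Finset.exists_mem_eq_sup' hF (fun f => |fa1 d0 μ R a f - fa0 d0 μ R a f|)
  obtain ⟨p0, hp0mem, hp0eq⟩ :=
    Finset.exists_mem_eq_sup' hΨ (fun ψ' => |psir P a true ψ' - psir P a false ψ'|)
  have hprod : ∃ ψ' ∈ Ψ, (fa1 d0 μ R a f0 - fa0 d0 μ R a f0) *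
      (psir P a true ψ' - psir P a false ψ') = Mf * Mψ := by
    rcases le_or_gt 0 ((fa1 d0 μ R a f0 - fa0 d0 μ R a f0) *
        (psir P a true p0 - psir P a false p0)) with hpos | hneg
    · exact ⟨p0, hp0mem, by
        rw [← abs_of_nonneg hpos, abs_mul, ← hf0eq, ← hp0eq]⟩
    · refine ⟨(fun y a' => 1 - p0 y a'), hΨcl p0 hp0mem, ?_⟩
      rw [hcomp p0]
      calc (fa1 d0 μ R a f0 - fa0 d0 μ R a f0) *
            -(psir P a true p0 - psir P a false p0)
          = -((fa1 d0 μ R a f0 - fa0 d0 μ R a f0) *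
            (psir P a true p0 - psir P a false p0)) := by ring
        _ = |(fa1 d0 μ R a f0 - fa0 d0 μ R a f0) *
            (psir P a true p0 - psir P a false p0)| := (abs_of_neg hneg).symm
        _ = |fa1 d0 μ R a f0 - fa0 d0 μ R a f0| *
            |psir P a true p0 - psir P a false p0| := abs_mul _ _
        _ = Mf * Mψ := by rw [← hf0eq, ← hp0eq]
  obtain ⟨ψ', hψ'mem, hψ'eq⟩ := hprod
  have hmin' := hmin f0 hf0mem ψ' hψ'mem
  rw [hLa fhat ψhat, hLa f0 ψ', hψ'eq, neg_le_neg_iff] at hmin'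
  have key : Mf * Mψ ≤ (fa1 d0 μ R a fhat - fa0 d0 μ R a fhat) *
      (psir P a true ψhat - psir P a false ψhat) :=
    le_of_mul_le_mul_left hmin' hc
  have h1 : |fa1 d0 μ R a fhat - fa0 d0 μ R a fhat| ≤ Mf :=
    Finset.le_sup' (fun f => |fa1 d0 μ R a f - fa0 d0 μ R a f|) hfhat
  have h2 : |psir P a true ψhat - psir P a false ψhat| ≤ Mψ :=
    Finset.le_sup' (fun ψ' => |psir P a true ψ' - psir P a false ψ'|) hψhat
  have keyabs : Mf * Mψ ≤ |fa1 d0 μ R a fhat - fa0 d0 μ R a fhat| *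
      |psir P a true ψhat - psir P a false ψhat| := by
    rw [← abs_mul]
    exact key.trans (le_abs_self _)
  constructor
  · refine le_antisymm h1 ?_
    have h3 : |fa1 d0 μ R a fhat - fa0 d0 μ R a fhat| *
        |psir P a true ψhat - psir P a false ψhat|
        ≤ |fa1 d0 μ R a fhat - fa0 d0 μ R a fhat| * Mψ :=
      mul_le_mul_of_nonneg_left h2 (abs_nonneg _)
    exact le_of_mul_le_mul_right (keyabs.trans h3) hMψpos
  · refine le_antisymm h2 ?_
    have h3 : |fa1 d0 μ R a fhat - fa0 d0 μ R a fhat| *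
        |psir P a true ψhat - psir P a false ψhat|
        ≤ Mf * |psir P a true ψhat - psir P a false ψhat| :=
      mul_le_mul_of_nonneg_right h1 (abs_nonneg _)
    exact le_of_mul_le_mul_left (keyabs.trans h3) hMfpos
end

section
/- Suppose the behavior policy is uniform, μ(a|x) = 1/K for all (x,a) where K = |A|. Fix ā ∈ A, let V(π_ā) = Σ_x d0(x)R(x,ā) be the value of the constant policy that always selects ā, and assume 0 < V(π_ā) < 1. For f : X × A → [0,1], let V_f(π_ā) = Σ_x d0(x)f(x,ā) and Cov_{π_ā}(f,R) = Σ_x d0(x)·(f(x,ā) − V_f(π_ā))·(R(x,ā) − V(π_ā)). Then f_{ā,1} − f_{ā,0} = Cov_{π_ā}(f,R) / (V(π_ā)·(1 − V(π_ā))), and consequently |f_{ā,1} − f_{ā,0}| ≥ 4·|Cov_{π_ā}(f,R)|. -/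
open Finset

variable {X A Y : Type*} [Fintype X] [Fintype A] [Fintype Y]

/-! Write `E` for the `d0`-expectation at `ā`. With a constant behavior policy the factor
`μ = 1/K` cancels from every ratio, so `f_{ā,1} = E[R f] / V` and
`f_{ā,0} = E[(1 - R) f] / (1 - V)`. Their difference is
`(E[R f] - V·E[f]) / (V (1 - V)) = Cov(f, R) / (V (1 - V))`, and `V (1 - V) ≤ 1/4`. -/

section ConstantPolicy

omit [Fintype A]

variable (d0 : X → ℝ) (R f : X → A → ℝ) (a : A) {c : ℝ}

lemma dmu_const : dmu d0 (fun _ _ => c) a = c * ∑ x, d0 x := by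
  simp only [dmu, Finset.mul_sum, mul_comm]

lemma rho_const (hc : c ≠ 0) (hd0 : ∑ x, d0 x = 1) :
    rho d0 (fun _ _ => c) R a = ∑ x, d0 x * R x a := by
  have hnum : ∑ x, d0 x * c * R x a = c * ∑ x, d0 x * R x a := by
    rw [Finset.mul_sum]
    exact Finset.sum_congr rfl fun _ _ => by ring
  rw [rho, dmu_const, hd0, mul_one, hnum, mul_div_cancel_left₀ _ hc]

lemma fa1_const (hc : c ≠ 0) (hd0 : ∑ x, d0 x = 1) :
    fa1 d0 (fun _ _ => c) R a f = (∑ x, d0 x * R x a * f x a) / ∑ x, d0 x * R x a := by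
  have hnum : ∑ x, d0 x * c * R x a * f x a = c * ∑ x, d0 x * R x a * f x a := by
    rw [Finset.mul_sum]
    exact Finset.sum_congr rfl fun _ _ => by ring
  rw [fa1, rho_const d0 R a hc hd0, dmu_const, hd0, mul_one, hnum, mul_div_mul_left _ _ hc]

lemma fa0_const (hc : c ≠ 0) (hd0 : ∑ x, d0 x = 1) :
    fa0 d0 (fun _ _ => c) R a f =
      (∑ x, d0 x * (1 - R x a) * f x a) / (1 - ∑ x, d0 x * R x a) := by
  have hnum : ∑ x, d0 x * c * (1 - R x a) * f x a = c * ∑ x, d0 x * (1 - R x a) * f x a := by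
    rw [Finset.mul_sum]
    exact Finset.sum_congr rfl fun _ _ => by ring
  rw [fa0, rho_const d0 R a hc hd0, dmu_const, hd0, mul_one, hnum, mul_div_mul_left _ _ hc]

lemma fa1_sub_fa0_const (hc : c ≠ 0) (hd0 : ∑ x, d0 x = 1)
    (hV0 : ∑ x, d0 x * R x a ≠ 0) (hV1 : 1 - ∑ x, d0 x * R x a ≠ 0) :
    fa1 d0 (fun _ _ => c) R a f - fa0 d0 (fun _ _ => c) R a f =
      (∑ x, d0 x * R x a * f x a - (∑ x, d0 x * R x a) * ∑ x, d0 x * f x a) /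
        ((∑ x, d0 x * R x a) * (1 - ∑ x, d0 x * R x a)) := by
  have hnum0 : ∑ x, d0 x * (1 - R x a) * f x a =
      ∑ x, d0 x * f x a - ∑ x, d0 x * R x a * f x a := by
    rw [← Finset.sum_sub_distrib]
    exact Finset.sum_congr rfl fun _ _ => by ring
  rw [fa1_const d0 R f a hc hd0, fa0_const d0 R f a hc hd0, hnum0]
  field_simp
  ring

end ConstantPolicy

lemma sum_mul_sub_mul_sub_eq (w u v : X → ℝ) (hw : ∑ x, w x = 1) :
    ∑ x, w x * (u x - ∑ y, w y * u y) * (v x - ∑ y, w y * v y) =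
      ∑ x, w x * v x * u x - (∑ x, w x * v x) * ∑ x, w x * u x := by
  set Eu := ∑ y, w y * u y
  set Ev := ∑ y, w y * v y
  have hexpand : ∀ x, w x * (u x - Eu) * (v x - Ev) =
      w x * v x * u x - Ev * (w x * u x) - Eu * (w x * v x) + Eu * Ev * w x :=
    fun x => by ring
  simp only [hexpand, Finset.sum_add_distrib, Finset.sum_sub_distrib, ← Finset.mul_sum, hw]
  ring

lemma four_mul_abs_le_abs_div_mul_one_sub {V : ℝ} (hV0 : 0 < V) (hV1 : V < 1) (c : ℝ) :
    4 * |c| ≤ |c / (V * (1 - V))| := by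
  have hpos : 0 < V * (1 - V) := mul_pos hV0 (sub_pos.2 hV1)
  have hquarter : V * (1 - V) ≤ 1 / 4 := by nlinarith [sq_nonneg (V - 1 / 2)]
  rw [abs_div, abs_of_pos hpos, le_div_iff₀ hpos]
  nlinarith [abs_nonneg c]

theorem statement7_general
    (d0 : X → ℝ) (R : X → A → ℝ) (abar : A)
    (hd0sum : ∑ x, d0 x = 1)
    (f : X → A → ℝ)
    (hV0 : 0 < ∑ x, d0 x * R x abar) (hV1 : ∑ x, d0 x * R x abar < 1) :
    let μ : X → A → ℝ := fun _ _ => 1 / (Fintype.card A : ℝ)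
    let V : ℝ := ∑ x, d0 x * R x abar
    let Vf : ℝ := ∑ x, d0 x * f x abar
    let Cov : ℝ := ∑ x, d0 x * (f x abar - Vf) * (R x abar - V)
    fa1 d0 μ R abar f - fa0 d0 μ R abar f = Cov / (V * (1 - V)) ∧
      4 * |Cov| ≤ |fa1 d0 μ R abar f - fa0 d0 μ R abar f| := by
  intro μ V Vf Cov
  have hc : 1 / (Fintype.card A : ℝ) ≠ 0 := by
    have := Fintype.card_pos_iff.2 ⟨abar⟩
    positivity
  have hCov : Cov = ∑ x, d0 x * R x abar * f x abar - V * Vf :=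
    sum_mul_sub_mul_sub_eq d0 (f · abar) (R · abar) hd0sum
  have hdiff : fa1 d0 μ R abar f - fa0 d0 μ R abar f = Cov / (V * (1 - V)) := by
    rw [fa1_sub_fa0_const d0 R f abar hc hd0sum hV0.ne' (sub_pos.2 hV1).ne', hCov]
  exact ⟨hdiff, hdiff ▸ four_mul_abs_le_abs_div_mul_one_sub hV0 hV1 Cov⟩

/-- under the uniform behavior policy `μ(a|x) = 1/K`,
`f_{ā,1} − f_{ā,0} = Cov_{π_ā}(f,R) / (V(π_ā)·(1 − V(π_ā)))`, and consequently
`|f_{ā,1} − f_{ā,0}| ≥ 4·|Cov_{π_ā}(f,R)|`. -/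
theorem statement7
    (d0 : X → ℝ) (R : X → A → ℝ) (abar : A)
    (hd0 : ∀ x, 0 ≤ d0 x) (hd0sum : ∑ x, d0 x = 1)
    (hR : ∀ x a', R x a' ∈ Set.Icc (0:ℝ) 1)
    (f : X → A → ℝ) (hf : ∀ x a', f x a' ∈ Set.Icc (0:ℝ) 1)
    (hV0 : 0 < ∑ x, d0 x * R x abar) (hV1 : ∑ x, d0 x * R x abar < 1) :
    let μ : X → A → ℝ := fun _ _ => 1 / (Fintype.card A : ℝ)
    let V : ℝ := ∑ x, d0 x * R x abar
    let Vf : ℝ := ∑ x, d0 x * f x abar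
    let Cov : ℝ := ∑ x, d0 x * (f x abar - Vf) * (R x abar - V)
    fa1 d0 μ R abar f - fa0 d0 μ R abar f = Cov / (V * (1 - V)) ∧
      4 * |Cov| ≤ |fa1 d0 μ R abar f - fa0 d0 μ R abar f| :=
  statement7_general d0 R abar hd0sum f hV0 hV1
end

section
/- Let X = A = {0,1,…,9}, d0 the uniform distribution on X, π_bad the uniformly random policy (π_bad(a|x) = 1/10), R(x,a) = 1 if x = a and 0 otherwise, feedback y(x,a) = (a + R(x,a)) mod 10, and π* the deterministic policy π*(a|x) = 1 if a = x. Define the original IGL objective L(π,ψ) = Σ_{x,a} d0(x)π(a|x)ψ(y(x,a)) − Σ_{x,a} d0(x)π_bad(a|x)ψ(y(x,a)). Then for every function ψ : {0,…,9} → [0,1], L(π*,ψ) = 0. -/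
open Finset

variable {X A Y : Type*} [Fintype X] [Fintype A] [Fintype Y]

/-- The original IGL objective `L(π,ψ) = V(π,ψ) − V(π_bad,ψ)` in the environment
`X = A = {0,…,9}`, `d0` uniform, `π_bad` uniformly random, `R(x,a) = 1[x = a]`,
feedback `y(x,a) = (a + R(x,a)) mod 10` (addition in `Fin 10` is mod 10),
where `π x a` denotes `π(a|x)`. -/
noncomputable def Ligl (π : Fin 10 → Fin 10 → ℝ) (ψ : Fin 10 → ℝ) : ℝ :=
  (∑ x, ∑ a, (1 / 10 : ℝ) * π x a * ψ (a + if x = a then 1 else 0))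
    - (∑ x, ∑ a, (1 / 10 : ℝ) * (1 / 10 : ℝ) * ψ (a + if x = a then 1 else 0))

/-- for the optimal policy `π*(a|x) = 1[a = x]`, the original IGL objective
vanishes: `L(π*, ψ) = 0` for every decoder `ψ : Y → [0,1]`. -/
theorem statement8 :
    ∀ ψ : Fin 10 → ℝ, (∀ y, ψ y ∈ Set.Icc (0:ℝ) 1) →
      Ligl (fun x a => if a = x then 1 else 0) ψ = 0 := by
  intro ψ _
  have hshift : ∑ x : Fin 10, ψ (x + 1) = ∑ x : Fin 10, ψ x :=
    Fintype.sum_equiv (Equiv.addRight (1 : Fin 10)) _ _ (fun x => rfl)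
  have h1 : ∀ x : Fin 10,
      (∑ a, (1/10 : ℝ) * (if a = x then 1 else 0) * ψ (a + if x = a then 1 else 0))
        = (1/10 : ℝ) * ψ (x + 1) := by
    intro x
    rw [Finset.sum_eq_single x]
    · simp
    · intro b _ hb; simp [hb]
    · simp
  have h2 : ∀ x : Fin 10,
      (∑ a : Fin 10, (1/10 : ℝ) * (1/10) * ψ (a + if x = a then 1 else 0))
        = (1/100 : ℝ) * ψ (x + 1) + ∑ a ∈ univ.erase x, (1/100 : ℝ) * ψ a := by
    intro x
    rw [← Finset.add_sum_erase _ _ (mem_univ x)]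
    congr 1
    · norm_num
    · apply Finset.sum_congr rfl
      intro a ha
      have : x ≠ a := fun h => (mem_erase.mp ha).1 h.symm
      simp [this]
      norm_num
  simp only [Ligl, h1, h2, Finset.sum_add_distrib]
  rw [← Finset.mul_sum, ← Finset.mul_sum, hshift]
  have h3 : ∑ x : Fin 10, ∑ a ∈ univ.erase x, (1/100 : ℝ) * ψ a
      = ∑ x : Fin 10, ((∑ a : Fin 10, (1/100 : ℝ) * ψ a) - (1/100) * ψ x) := by
    apply Finset.sum_congr rfl
    intro x _
    rw [Finset.sum_erase_eq_sub (mem_univ x)]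
  rw [h3]
  simp only [Finset.sum_sub_distrib, Finset.sum_const, card_univ, Fintype.card_fin,
    ← Finset.mul_sum]
  ring
end

section
/- (Deterministic core of Lemma 1, discovering latent reward.) Fix a ∈ A with d^μ_a > 0 and 0 < ρ^μ_a < 1, and assume context conditional independence. Let F be a nonempty finite set of functions f : X × A → [0,1] and Ψ a nonempty finite set of functions ψ : Y × A → [0,1] closed under complementation (ψ ∈ Ψ implies 1 − ψ ∈ Ψ), with some ψ* ∈ Ψ satisfying ψ*_{a,1} − ψ*_{a,0} = 1 and Δ := max over f ∈ F of |f_{a,1} − f_{a,0}| > 0. Define C(f,ψ) = E_{μ_a}[f(x,a)ψ(y,a)] − E_{μ_a}[f(x,a)]·E_{μ_a}[ψ(y,a)]. Suppose Ĉ : F × Ψ → ℝ satisfies |Ĉ(f,ψ) − C(f,ψ)| ≤ ε for all (f,ψ) ∈ F × Ψ, and let (f̂, ψ̂) maximize Ĉ over F × Ψ. Then (f̂_{a,1} − f̂_{a,0})·(ψ̂_{a,1} − ψ̂_{a,0}) ≥ Δ − 2ε/(ρ^μ_a·(1 − ρ^μ_a)); consequently |f̂_{a,1} − f̂_{a,0}|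 ≥ Δ − 2ε/(ρ^μ_a·(1 − ρ^μ_a)) and |ψ̂_{a,1} − ψ̂_{a,0}| ≥ 1 − 2ε/(Δ·ρ^μ_a·(1 − ρ^μ_a)). -/
open Finset

variable {X A Y : Type*} [Fintype X] [Fintype A] [Fintype Y]

lemma emu_eval (d0 : X → ℝ) (μ : X → A → ℝ) (R : X → A → ℝ) (P : A → Bool → Y → ℝ) (a : A)
    (f : X → A → ℝ) (ψ : Y → A → ℝ) :
    Emu d0 μ R P a (fun x y => f x a * ψ y a) =
    (1 / dmu d0 μ a) * ((∑ x, d0 x * μ x a * (1 - R x a) * f x a) * psir P a false ψ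
      + (∑ x, d0 x * μ x a * R x a * f x a) * psir P a true ψ) := by
  unfold Emu psir
  congr 1
  rw [Finset.sum_mul, Finset.sum_mul, ← Finset.sum_add_distrib]
  refine Finset.sum_congr rfl fun x _ => ?_
  rw [Finset.mul_sum, Finset.mul_sum, ← Finset.sum_add_distrib]
  exact Finset.sum_congr rfl fun y _ => by ring

set_option maxHeartbeats 1000000 in
/-- deterministic core of Lemma 1: maximizing an `ε`-accurate estimate `Ĉ` of
`C(f,ψ) = E_{μ_a}[fψ] − E_{μ_a}[f]·E_{μ_a}[ψ]` over `F × Ψ` nearly maximizes the separation: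
`(f̂_{a,1} − f̂_{a,0})·(ψ̂_{a,1} − ψ̂_{a,0}) ≥ Δ − 2ε/(ρ(1−ρ))`, hence
`|f̂_{a,1} − f̂_{a,0}| ≥ Δ − 2ε/(ρ(1−ρ))` and
`|ψ̂_{a,1} − ψ̂_{a,0}| ≥ 1 − 2ε/(Δ·ρ·(1−ρ))`. -/
theorem statement11
    (d0 : X → ℝ) (μ : X → A → ℝ) (R : X → A → ℝ) (P : A → Bool → Y → ℝ) (a : A)
    (hd0 : ∀ x, 0 ≤ d0 x) (hd0sum : ∑ x, d0 x = 1)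
    (hμ : ∀ x a', 0 ≤ μ x a') (hμsum : ∀ x, ∑ a', μ x a' = 1)
    (hR : ∀ x a', R x a' ∈ Set.Icc (0:ℝ) 1)
    (hP : ∀ a' r y, 0 ≤ P a' r y) (hPsum : ∀ a' r, ∑ y, P a' r y = 1)
    (hda : 0 < dmu d0 μ a) (hρ0 : 0 < rho d0 μ R a) (hρ1 : rho d0 μ R a < 1)
    (F : Finset (X → A → ℝ)) (hF : F.Nonempty)
    (hFmem : ∀ f ∈ F, ∀ x a', f x a' ∈ Set.Icc (0:ℝ) 1)
    (Ψ : Finset (Y → A → ℝ)) (hΨ : Ψ.Nonempty)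
    (hΨmem : ∀ ψ ∈ Ψ, ∀ y a', ψ y a' ∈ Set.Icc (0:ℝ) 1)
    (hΨcl : ∀ ψ ∈ Ψ, (fun y a' => 1 - ψ y a') ∈ Ψ)
    (ψstar : Y → A → ℝ) (hψstarmem : ψstar ∈ Ψ)
    (hψstar : psir P a true ψstar - psir P a false ψstar = 1)
    (hΔpos : 0 < F.sup' hF (fun f => |fa1 d0 μ R a f - fa0 d0 μ R a f|))
    (Chat : (X → A → ℝ) → (Y → A → ℝ) → ℝ) (ε : ℝ)
    (hChat : ∀ f ∈ F, ∀ ψ ∈ Ψ,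
      |Chat f ψ - (Emu d0 μ R P a (fun x y => f x a * ψ y a)
        - Emu d0 μ R P a (fun x _ => f x a) * Emu d0 μ R P a (fun _ y => ψ y a))| ≤ ε)
    (fhat : X → A → ℝ) (ψhat : Y → A → ℝ) (hfhat : fhat ∈ F) (hψhat : ψhat ∈ Ψ)
    (hmax : ∀ f ∈ F, ∀ ψ ∈ Ψ, Chat f ψ ≤ Chat fhat ψhat) :
    (F.sup' hF (fun f => |fa1 d0 μ R a f - fa0 d0 μ R a f|))
        - 2 * ε / (rho d0 μ R a * (1 - rho d0 μ R a)) ≤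
      (fa1 d0 μ R a fhat - fa0 d0 μ R a fhat) *
        (psir P a true ψhat - psir P a false ψhat) ∧
    (F.sup' hF (fun f => |fa1 d0 μ R a f - fa0 d0 μ R a f|))
        - 2 * ε / (rho d0 μ R a * (1 - rho d0 μ R a)) ≤
      |fa1 d0 μ R a fhat - fa0 d0 μ R a fhat| ∧
    1 - 2 * ε / ((F.sup' hF (fun f => |fa1 d0 μ R a f - fa0 d0 μ R a f|)) *
        rho d0 μ R a * (1 - rho d0 μ R a)) ≤
      |psir P a true ψhat - psir P a false ψhat| := by
  classical
  set D := dmu d0 μ a with hD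
  set ρ := rho d0 μ R a with hρdef
  set S1 := ∑ x, d0 x * μ x a * R x a with hS1def
  set S0 := ∑ x, d0 x * μ x a * (1 - R x a) with hS0def
  have hDS : S0 + S1 = D := by
    rw [hS0def, hS1def, hD]
    unfold dmu
    rw [← Finset.sum_add_distrib]
    exact Finset.sum_congr rfl fun x _ => by ring
  have hρS : ρ = S1 / D := rfl
  have hS1eq : D * ρ = S1 := by rw [hρS]; field_simp
  have hS0eq : D * (1 - ρ) = S0 := by
    have : D * (1 - ρ) = D - D * ρ := by ring
    rw [this, hS1eq]; linarith
  have hS1pos : 0 < S1 := by rw [← hS1eq]; positivity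
  have hS0pos : 0 < S0 := by
    rw [← hS0eq]; exact mul_pos hda (by linarith)
  -- evaluation of the three expectations
  have hemu_f : ∀ f : X → A → ℝ, Emu d0 μ R P a (fun x _ => f x a) =
      (1 / D) * ((∑ x, d0 x * μ x a * (1 - R x a) * f x a)
        + (∑ x, d0 x * μ x a * R x a * f x a)) := by
    intro f
    have h := emu_eval d0 μ R P a f (fun _ _ => (1:ℝ))
    simp only [mul_one, psir, hPsum] at h
    simpa using h
  have hemu_ψ : ∀ ψ : Y → A → ℝ, Emu d0 μ R P a (fun _ y => ψ y a) =
      (1 / D) * (S0 * psir P a false ψ + S1 * psir P a true ψ) := by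
    intro ψ
    have h := emu_eval d0 μ R P a (fun _ _ => (1:ℝ)) ψ
    simp only [one_mul, mul_one] at h
    simpa [hS0def, hS1def] using h
  -- key identity
  have key : ∀ f : X → A → ℝ, ∀ ψ : Y → A → ℝ,
      Emu d0 μ R P a (fun x y => f x a * ψ y a)
        - Emu d0 μ R P a (fun x _ => f x a) * Emu d0 μ R P a (fun _ y => ψ y a)
      = ρ * (1 - ρ) * ((fa1 d0 μ R a f - fa0 d0 μ R a f)
          * (psir P a true ψ - psir P a false ψ)) := by
    intro f ψ
    have hfa1 : fa1 d0 μ R a f = (∑ x, d0 x * μ x a * R x a * f x a) / S1 := by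
      unfold fa1; rw [← hS1eq]
    have hfa0 : fa0 d0 μ R a f = (∑ x, d0 x * μ x a * (1 - R x a) * f x a) / S0 := by
      unfold fa0; rw [← hS0eq]
    rw [emu_eval, hemu_f, hemu_ψ, hfa1, hfa0, hρS]
    simp only [← hD]
    rw [← hDS]
    have h01 : (0:ℝ) < S0 + S1 := by linarith
    generalize (∑ x, d0 x * μ x a * R x a * f x a) = T1
    generalize (∑ x, d0 x * μ x a * (1 - R x a) * f x a) = T0
    generalize psir P a true ψ = q1
    generalize psir P a false ψ = q0
    field_simp
    ring
  set Δ := F.sup' hF (fun f => |fa1 d0 μ R a f - fa0 d0 μ R a f|) with hΔdef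
  have hεnn : 0 ≤ ε := le_trans (abs_nonneg _) (hChat fhat hfhat ψhat hψhat)
  -- psir bounds
  have hψbd : ∀ ψ ∈ Ψ, ∀ r, psir P a r ψ ∈ Set.Icc (0:ℝ) 1 := by
    intro ψ hψm r
    constructor
    · exact Finset.sum_nonneg fun y _ => mul_nonneg (hP a r y) (hΨmem ψ hψm y a).1
    · calc ∑ y, P a r y * ψ y a ≤ ∑ y, P a r y * 1 :=
          Finset.sum_le_sum fun y _ =>
            mul_le_mul_of_nonneg_left (hΨmem ψ hψm y a).2 (hP a r y)
        _ = 1 := by simp [hPsum a r]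
  -- choose fstar attaining the sup, and matching ψ'
  obtain ⟨fstar, hfstarF, hfstar⟩ := Finset.exists_mem_eq_sup' hF
    (fun f => |fa1 d0 μ R a f - fa0 d0 μ R a f|)
  rw [← hΔdef] at hfstar
  have hcompl : psir P a true (fun y a' => 1 - ψstar y a')
      - psir P a false (fun y a' => 1 - ψstar y a')
      = -(psir P a true ψstar - psir P a false ψstar) := by
    simp only [psir, mul_sub, mul_one, Finset.sum_sub_distrib, hPsum]
    ring
  have hexψ : ∃ ψ' ∈ Ψ, (fa1 d0 μ R a fstar - fa0 d0 μ R a fstar) *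
      (psir P a true ψ' - psir P a false ψ') = Δ := by
    rcases le_or_gt 0 (fa1 d0 μ R a fstar - fa0 d0 μ R a fstar) with h | h
    · exact ⟨ψstar, hψstarmem, by
        rw [hψstar, mul_one, hfstar, abs_of_nonneg h]⟩
    · refine ⟨fun y a' => 1 - ψstar y a', hΨcl ψstar hψstarmem, ?_⟩
      rw [hcompl, hψstar, hfstar, abs_of_neg h]; ring
  obtain ⟨ψ', hψ'Ψ, hψ'eq⟩ := hexψ
  have hpos : 0 < ρ * (1 - ρ) := mul_pos hρ0 (by linarith)
  -- chain of inequalities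
  have h1 := hChat fstar hfstarF ψ' hψ'Ψ
  have h2 := hChat fhat hfhat ψhat hψhat
  rw [key, hψ'eq] at h1
  rw [key] at h2
  have h3 := hmax fstar hfstarF ψ' hψ'Ψ
  rw [abs_le] at h1 h2
  have hmain : ρ * (1 - ρ) * Δ - 2 * ε ≤
      ρ * (1 - ρ) * ((fa1 d0 μ R a fhat - fa0 d0 μ R a fhat) *
        (psir P a true ψhat - psir P a false ψhat)) := by
    linarith [h1.1, h1.2, h2.1, h2.2, h3]
  set prod := (fa1 d0 μ R a fhat - fa0 d0 μ R a fhat) *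
        (psir P a true ψhat - psir P a false ψhat) with hproddef
  have goal1 : Δ - 2 * ε / (ρ * (1 - ρ)) ≤ prod := by
    have h4 : (Δ - prod) * (ρ * (1 - ρ)) ≤ 2 * ε := by nlinarith
    have h5 : Δ - prod ≤ 2 * ε / (ρ * (1 - ρ)) := (le_div_iff₀ hpos).mpr h4
    linarith
  have hψhatbd : |psir P a true ψhat - psir P a false ψhat| ≤ 1 := by
    have hb1 := hψbd ψhat hψhat true
    have hb0 := hψbd ψhat hψhat false
    rw [abs_le]; constructor <;> [linarith [hb1.1, hb0.2]; linarith [hb1.2, hb0.1]]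
  have hprodabs : prod ≤ |fa1 d0 μ R a fhat - fa0 d0 μ R a fhat| *
      |psir P a true ψhat - psir P a false ψhat| := by
    rw [← abs_mul]; exact le_abs_self _
  have goal2 : Δ - 2 * ε / (ρ * (1 - ρ)) ≤ |fa1 d0 μ R a fhat - fa0 d0 μ R a fhat| := by
    have := mul_le_mul_of_nonneg_left hψhatbd
      (abs_nonneg (fa1 d0 μ R a fhat - fa0 d0 μ R a fhat))
    nlinarith [abs_nonneg (fa1 d0 μ R a fhat - fa0 d0 μ R a fhat)]
  refine ⟨goal1, goal2, ?_⟩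
  have hfΔ : |fa1 d0 μ R a fhat - fa0 d0 μ R a fhat| ≤ Δ :=
    Finset.le_sup' (fun f => |fa1 d0 μ R a f - fa0 d0 μ R a f|) hfhat
  have hprodΔ : prod ≤ Δ * |psir P a true ψhat - psir P a false ψhat| := by
    have := mul_le_mul_of_nonneg_right hfΔ
      (abs_nonneg (psir P a true ψhat - psir P a false ψhat))
    linarith [hprodabs]
  have hΔ' : (0:ℝ) < Δ := hΔpos
  have hfield : 2 * ε / (Δ * ρ * (1 - ρ)) * Δ = 2 * ε / (ρ * (1 - ρ)) := by
    rw [show Δ * ρ * (1 - ρ) = ρ * (1 - ρ) * Δ from by ring, ← div_div,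
      div_mul_cancel₀ _ hΔ'.ne']
  nlinarith [hprodΔ, goal1, hfield, hΔ']
end
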